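/- Let α ≥ 0, γ ≥ 1 be real and β ∈ ℂ with γ+α > |β|. Then for all z in the open unit disc, the derivative of the normalized Rabotnov function satisfies |𝓡'_{α,β,γ}(z)| ≤ (γ+α+|β|)/(γ+α−|β|). -/

import Mathlib

open Complex

noncomputable def rabA (α γ : ℝ) (β : ℂ) (n : ℕ) : ℂ :=
  β ^ n * (Real.Gamma (γ + α) : ℂ) / (Real.Gamma ((γ + α) * (n + 1)) : ℂ)

noncomputable def rab (α γ : ℝ) (β : ℂ) (z : ℂ) : ℂ :=
  z + ∑' k : ℕ, rabA α γ β (k + 1) * z ^ (k + 2)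

noncomputable def rabPartial (α γ : ℝ) (β : ℂ) (m : ℕ) (z : ℂ) : ℂ :=
  z + ∑ k ∈ Finset.range m, rabA α γ β (k + 1) * z ^ (k + 2)

noncomputable def rabD (α γ : ℝ) (β : ℂ) (z : ℂ) : ℂ :=
  1 + ∑' k : ℕ, ((k : ℂ) + 2) * rabA α γ β (k + 1) * z ^ (k + 1)

noncomputable def rabDPartial (α γ : ℝ) (β : ℂ) (m : ℕ) (z : ℂ) : ℂ :=
  1 + ∑ k ∈ Finset.range m, ((k : ℂ) + 2) * rabA α γ β (k + 1) * z ^ (k + 1)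

noncomputable def rabAlex (α γ : ℝ) (β : ℂ) (z : ℂ) : ℂ :=
  z + ∑' k : ℕ, rabA α γ β (k + 1) / ((k : ℂ) + 2) * z ^ (k + 2)

noncomputable def rabAlexPartial (α γ : ℝ) (β : ℂ) (m : ℕ) (z : ℂ) : ℂ :=
  z + ∑ k ∈ Finset.range m, rabA α γ β (k + 1) / ((k : ℂ) + 2) * z ^ (k + 2)

/-!
Write `c = γ + α ≥ 1` and `r = |β| / c < 1`. Iterating `Γ(x + 1) = x Γ(x)` and using that `Γ`
increases on `[2, ∞)` gives `Γ(c (n + 1)) ≥ cⁿ n! Γ(c)`, hence `|A_n| ≤ rⁿ / n!`. As `n + 1 ≤ 2 n!`,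
the `n`-th term of `𝓡' - 1` is at most `2 rⁿ` on the unit disc, so
`|𝓡'(z)| ≤ 1 + 2r / (1 - r) = (c + |β|) / (c - |β|)`.
-/

open scoped Nat

lemma pow_mul_factorial_mul_Gamma_le {c : ℝ} (hc : 1 ≤ c) (n : ℕ) :
    c ^ n * n ! * Real.Gamma c ≤ Real.Gamma (c * (n + 1)) := by
  induction n with
  | zero => simp
  | succ n ih =>
    have hcn : 1 ≤ c * (n + 1) := one_le_mul_of_one_le_of_one_le hc (by simp)
    calc c ^ (n + 1) * (n + 1)! * Real.Gamma c = c * (n + 1) * (c ^ n * n ! * Real.Gamma c) := by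
          push_cast [Nat.factorial_succ]; ring
      _ ≤ c * (n + 1) * Real.Gamma (c * (n + 1)) := by gcongr
      _ = Real.Gamma (c * (n + 1) + 1) := (Real.Gamma_add_one (by positivity)).symm
      _ ≤ Real.Gamma (c * ((n + 1 : ℕ) + 1)) :=
          Real.Gamma_strictMonoOn_Ici.monotoneOn (by simp; linarith) (by simp; nlinarith)
            (by push_cast; nlinarith)

lemma norm_rabA_le {α γ : ℝ} (β : ℂ) (hc : 1 ≤ γ + α) (n : ℕ) :
    ‖rabA α γ β n‖ ≤ (‖β‖ / (γ + α)) ^ n / n ! := by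
  have hc0 : 0 < γ + α := by linarith
  have hΓc : 0 < Real.Gamma (γ + α) := Real.Gamma_pos_of_pos hc0
  have hΓn : 0 < Real.Gamma ((γ + α) * (n + 1)) := Real.Gamma_pos_of_pos (by positivity)
  rw [rabA, norm_div, norm_mul, norm_pow, Complex.norm_real, Complex.norm_real,
    Real.norm_of_nonneg hΓc.le, Real.norm_of_nonneg hΓn.le, div_pow, div_div,
    div_le_div_iff₀ hΓn (by positivity), mul_assoc, mul_comm (Real.Gamma _)]
  gcongr
  exact pow_mul_factorial_mul_Gamma_le hc n

lemma succ_le_two_mul_factorial (n : ℕ) : n + 1 ≤ 2 * n ! := by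
  linarith [n.self_le_factorial, n.factorial_pos]

lemma norm_rabD_term_le {α γ : ℝ} (β : ℂ) (hc : 1 ≤ γ + α) {z : ℂ} (hz : ‖z‖ ≤ 1) (n : ℕ) :
    ‖((n : ℂ) + 1) * rabA α γ β n * z ^ n‖ ≤ 2 * (‖β‖ / (γ + α)) ^ n := by
  have hn : ‖(n : ℂ) + 1‖ = n + 1 := by exact_mod_cast Complex.norm_natCast (n + 1)
  rw [norm_mul, norm_mul, norm_pow, hn]
  calc (n + 1 : ℝ) * ‖rabA α γ β n‖ * ‖z‖ ^ n
      ≤ (2 * n !) * ((‖β‖ / (γ + α)) ^ n / n !) * 1 := by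
        gcongr
        · exact_mod_cast succ_le_two_mul_factorial n
        · exact norm_rabA_le β hc n
        · exact pow_le_one₀ (norm_nonneg z) hz
    _ = 2 * (‖β‖ / (γ + α)) ^ n := by field_simp

theorem rabD_bound (α γ : ℝ) (β : ℂ) (hα : 0 ≤ α) (hγ : 1 ≤ γ)
    (hβ : ‖β‖ < γ + α) (z : ℂ) (hz : ‖z‖ < 1) :
    ‖rabD α γ β z‖ ≤
      (γ + α + ‖β‖) / (γ + α - ‖β‖) := by
  have hc : 1 ≤ γ + α := by linarith
  set r := ‖β‖ / (γ + α) with hr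
  have hr0 : 0 ≤ r := by positivity
  have hr1 : r < 1 := (div_lt_one (by linarith)).mpr hβ
  have htail : ‖∑' k : ℕ, ((k : ℂ) + 2) * rabA α γ β (k + 1) * z ^ (k + 1)‖ ≤ 2 * r / (1 - r) := by
    refine tsum_of_norm_bounded ((hasSum_geometric_of_lt_one hr0 hr1).mul_left (2 * r)) fun k => ?_
    calc _ = ‖(((k + 1 : ℕ) : ℂ) + 1) * rabA α γ β (k + 1) * z ^ (k + 1)‖ := by push_cast; ring_nf
      _ ≤ 2 * r ^ (k + 1) := norm_rabD_term_le β hc hz.le (k + 1)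
      _ = 2 * r * r ^ k := by ring
  calc ‖rabD α γ β z‖ ≤ 1 + 2 * r / (1 - r) := by
        rw [rabD]; exact (norm_add_le _ _).trans (by rw [norm_one]; linarith)
    _ = (γ + α + ‖β‖) / (γ + α - ‖β‖) := by
        rw [hr]; field_simp [(by linarith : γ + α - ‖β‖ ≠ 0)]; ring
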